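/- arXiv:math/0609646 — 3 statements merged into one kernel-verified Lean document; each statement's English description precedes it below -/
import Mathlib

section
/- Let q ∈ ℂ* with |q| ≠ 1. For every a ∈ ℂ(z)* there exist g ∈ ℂ(z)* and a standard element ā ∈ ℂ(z)* such that a = ā·σ_q(g)/g. -/
/-!
Setting: fix `q ∈ ℂ*` with `|q| ≠ 1`.  We work with meromorphic functions on the
punctured plane `ℂ* = {z ≠ 0}`, represented as plain functions `ℂ → ℂ` together
with a `MeromorphicOn` hypothesis; all identities between meromorphic functions
are understood to hold off a countable (discrete) exceptional set (`MZeroOn`).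

* `CE q` is the field `C_E` of `σ_q`-invariant meromorphic functions on `ℂ*`;
* `KE q` is the field `K_E = C_E(z)`;
* `AlgIndepOver U K g` says that the family `g` of meromorphic functions on `U`
  is algebraically independent over the coefficient field `K`: every polynomial
  with coefficients in `K` that vanishes (as meromorphic function on `U`) at the
  family has all its coefficients zero as meromorphic functions;
* `delq` is the derivation `∂ = z·d/dz` on functions, `dRat` the corresponding
  derivation on rational functions;
* `sigmaq q` is the substitution `z ↦ qz` on rational functions `RatFunc ℂ`;
* `QDE q a f` is the q-difference equation `f(qz) = a(z)·f(z)` as an identity of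
  meromorphic functions on `ℂ*` (written without denominators);
* `ordAt a c` is the order of vanishing of the rational function `a` at `c`, and
  `divE q hq a` is the elliptic divisor of `a`, an element of the free abelian
  group on `ℂ*/q^ℤ` (realised as a finitely supported `ℤ`-valued function on the
  quotient group `ℂˣ ⧸ zpowers q`).
-/

open scoped Classical

noncomputable section

/-- The punctured complex plane ℂ*. -/
def Cstar : Set ℂ := {z : ℂ | z ≠ 0}

/-- `f` represents the zero meromorphic function on `U`:
it vanishes off a countable exceptional set. -/
def MZeroOn (U : Set ℂ) (f : ℂ → ℂ) : Prop :=
  ∃ S : Set ℂ, S.Countable ∧ ∀ z ∈ U \ S, f z = 0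

/-- `f` is a nonzero meromorphic function on `U`. -/
def MerNonzero (U : Set ℂ) (f : ℂ → ℂ) : Prop :=
  MeromorphicOn f U ∧ ¬ MZeroOn U f

/-- The derivation ∂ = z·d/dz. -/
def delq (f : ℂ → ℂ) : ℂ → ℂ := fun z => z * deriv f z

/-- The field C_E of σ_q-invariant meromorphic functions on ℂ*. -/
def CE (q : ℂ) : Set (ℂ → ℂ) :=
  {c | MeromorphicOn c Cstar ∧ ∀ z : ℂ, c (q * z) = c z}

/-- Evaluation of a polynomial with function coefficients at the coordinate z. -/
def evalz (P : Polynomial (ℂ → ℂ)) : ℂ → ℂ :=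
  Polynomial.eval (fun z : ℂ => z) P

/-- The field K_E = C_E(z): quotients of polynomials in z with coefficients in C_E. -/
def KE (q : ℂ) : Set (ℂ → ℂ) :=
  {f | ∃ Np Dp : Polynomial (ℂ → ℂ),
        (∀ i, Np.coeff i ∈ CE q) ∧ (∀ i, Dp.coeff i ∈ CE q) ∧
        ¬ MZeroOn Cstar (evalz Dp) ∧
        MZeroOn Cstar (fun z => f z * evalz Dp z - evalz Np z)}

/-- The family `g` of meromorphic functions on `U` is algebraically independent
over the set `K` of coefficient functions. -/
def AlgIndepOver (U : Set ℂ) (K : Set (ℂ → ℂ)) {ι : Type} (g : ι → ℂ → ℂ) : Prop :=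
  ∀ P : MvPolynomial ι (ℂ → ℂ),
    (∀ m, MvPolynomial.coeff m P ∈ K) →
    MZeroOn U (MvPolynomial.eval g P) →
    ∀ m, MZeroOn U (MvPolynomial.coeff m P)

/-- σ_q acting on rational functions: (σ_q a)(z) = a(qz). -/
def sigmaq (q : ℂ) (a : RatFunc ℂ) : RatFunc ℂ :=
  algebraMap (Polynomial ℂ) (RatFunc ℂ) (a.num.comp (Polynomial.C q * Polynomial.X)) /
    algebraMap (Polynomial ℂ) (RatFunc ℂ) (a.denom.comp (Polynomial.C q * Polynomial.X))

/-- The q-difference equation f(qz) = a(z)·f(z), as an identity of meromorphic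
functions on ℂ* (denominators cleared). -/
def QDE (q : ℂ) (a : RatFunc ℂ) (f : ℂ → ℂ) : Prop :=
  MZeroOn Cstar (fun z => f (q * z) * Polynomial.eval z a.denom - Polynomial.eval z a.num * f z)

/-- Order of vanishing of a rational function at a point. -/
def ordAt (a : RatFunc ℂ) (c : ℂ) : ℤ :=
  (Polynomial.rootMultiplicity c a.num : ℤ) - (Polynomial.rootMultiplicity c a.denom : ℤ)

/-- The elliptic divisor of a rational function: the image in Div(ℂ*/q^ℤ) of the
part of its divisor prime to 0, as a (finitely supported) ℤ-valued function on
the quotient group ℂˣ/q^ℤ. -/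
def divE (q : ℂ) (hq : q ≠ 0) (a : RatFunc ℂ) :
    (ℂˣ ⧸ Subgroup.zpowers (Units.mk0 q hq)) → ℤ := fun c =>
  ∑ᶠ α : ℂˣ,
    if (QuotientGroup.mk α : ℂˣ ⧸ Subgroup.zpowers (Units.mk0 q hq)) = c then
      ordAt a (α : ℂ) else 0

/-- An element of ℂ(z)* is standard if no two points of its divisor away from 0
are congruent modulo q^ℤ: if c ∈ ℂ* is a zero or pole of a and m ≠ 0, then q^m·c
is not a zero or pole of a. -/
def StandardQ (q : ℂ) (a : RatFunc ℂ) : Prop :=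
  ∀ c : ℂ, c ≠ 0 → ordAt a c ≠ 0 → ∀ m : ℤ, m ≠ 0 → ordAt a (q ^ m * c) = 0

/-- The derivation ∂ = z·d/dz on rational functions. -/
def dRat (a : RatFunc ℂ) : RatFunc ℂ :=
  RatFunc.X *
    ((algebraMap (Polynomial ℂ) (RatFunc ℂ) (Polynomial.derivative a.num) *
        algebraMap (Polynomial ℂ) (RatFunc ℂ) a.denom -
      algebraMap (Polynomial ℂ) (RatFunc ℂ) a.num *
        algebraMap (Polynomial ℂ) (RatFunc ℂ) (Polynomial.derivative a.denom)) /
      algebraMap (Polynomial ℂ) (RatFunc ℂ) a.denom ^ 2)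

/-!
Points of the divisor of `a` in `ℂ*` can be moved along their `q^ℤ`-orbits at the cost of a
factor `σ_q g / g`: `(X - e) / (X - q e) = σ_q g / g` for `g = (X - q e) / X`, so by telescoping
`(X - c) / (X - q^m c)` is such a quotient for every `m : ℤ`. If `a` is not standard, some `c`
and `q^m c`, distinct because `|q| ≠ 1`, both lie in its divisor; multiplying `a` by a power of
`(X - c) / (X - q^m c)` empties `c` without creating new points, so induction on the number of
zeros and poles in `ℂ*` ends at a standard element.
-/

open Polynomial

section Order

lemma RatFunc.X_sub_C_ne_zero (c : ℂ) : (RatFunc.X - RatFunc.C c : RatFunc ℂ) ≠ 0 := by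
  simpa [← RatFunc.algebraMap_X, ← RatFunc.algebraMap_C, ← map_sub] using
    RatFunc.algebraMap_ne_zero (Polynomial.X_sub_C_ne_zero c)

lemma ordAt_algebraMap_div {p s : ℂ[X]} (hp : p ≠ 0) (hs : s ≠ 0) (c : ℂ) :
    ordAt (algebraMap ℂ[X] (RatFunc ℂ) p / algebraMap ℂ[X] (RatFunc ℂ) s) c =
      (rootMultiplicity c p : ℤ) - rootMultiplicity c s := by
  set a := algebraMap ℂ[X] (RatFunc ℂ) p / algebraMap ℂ[X] (RatFunc ℂ) s
  have ha : a ≠ 0 := div_ne_zero (RatFunc.algebraMap_ne_zero hp) (RatFunc.algebraMap_ne_zero hs)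
  have hcross : a.num * s = p * a.denom := (RatFunc.num_mul_eq_mul_denom_iff hs).mpr rfl
  have hmult := congrArg (rootMultiplicity c) hcross
  rw [rootMultiplicity_mul (mul_ne_zero (RatFunc.num_ne_zero ha) hs),
    rootMultiplicity_mul (mul_ne_zero hp (RatFunc.denom_ne_zero a))] at hmult
  unfold ordAt
  omega

lemma ordAt_mul {a b : RatFunc ℂ} (ha : a ≠ 0) (hb : b ≠ 0) (c : ℂ) :
    ordAt (a * b) c = ordAt a c + ordAt b c := by
  have hab : a * b = algebraMap ℂ[X] (RatFunc ℂ) (a.num * b.num) /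
      algebraMap ℂ[X] (RatFunc ℂ) (a.denom * b.denom) := by
    rw [map_mul, map_mul, ← div_mul_div_comm, RatFunc.num_div_denom, RatFunc.num_div_denom]
  have hnum := mul_ne_zero (RatFunc.num_ne_zero ha) (RatFunc.num_ne_zero hb)
  have hdenom := mul_ne_zero (RatFunc.denom_ne_zero a) (RatFunc.denom_ne_zero b)
  rw [hab, ordAt_algebraMap_div hnum hdenom, rootMultiplicity_mul hnum,
    rootMultiplicity_mul hdenom, ordAt, ordAt]
  push_cast
  ring

lemma ordAt_inv {a : RatFunc ℂ} (ha : a ≠ 0) (c : ℂ) : ordAt a⁻¹ c = -ordAt a c := by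
  have h := ordAt_mul ha (inv_ne_zero ha) c
  rw [mul_inv_cancel₀ ha, ordAt, RatFunc.num_one, RatFunc.denom_one, sub_self] at h
  omega

lemma ordAt_zpow {a : RatFunc ℂ} (ha : a ≠ 0) (k : ℤ) (c : ℂ) :
    ordAt (a ^ k) c = k * ordAt a c := by
  induction k using Int.induction_on with
  | zero => simp [ordAt]
  | succ n ih => rw [zpow_add_one₀ ha, ordAt_mul (zpow_ne_zero _ ha) ha, ih]; ring
  | pred n ih =>
    rw [zpow_sub_one₀ ha, ordAt_mul (zpow_ne_zero _ ha) (inv_ne_zero ha), ih, ordAt_inv ha]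
    ring

lemma ordAt_X_sub_C_div_X_sub_C (c d e : ℂ) :
    ordAt ((RatFunc.X - RatFunc.C c) / (RatFunc.X - RatFunc.C d)) e =
      (if e = c then 1 else 0) - (if e = d then 1 else 0) := by
  simp only [← RatFunc.algebraMap_X, ← RatFunc.algebraMap_C, ← map_sub]
  rw [ordAt_algebraMap_div (X_sub_C_ne_zero c) (X_sub_C_ne_zero d), rootMultiplicity_X_sub_C,
    rootMultiplicity_X_sub_C]
  push_cast
  rfl

def divisorSupport (a : RatFunc ℂ) : Set ℂ := {c | c ≠ 0 ∧ ordAt a c ≠ 0}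

lemma divisorSupport_finite {a : RatFunc ℂ} (ha : a ≠ 0) : (divisorSupport a).Finite := by
  refine (finite_setOfPred_isRoot
    (mul_ne_zero (RatFunc.num_ne_zero ha) (RatFunc.denom_ne_zero a))).subset ?_
  rintro c ⟨-, hc⟩
  by_contra hroot
  simp only [Set.mem_ofPred_eq, IsRoot.def, eval_mul, mul_eq_zero, not_or] at hroot
  simp [ordAt, rootMultiplicity_eq_zero hroot.1, rootMultiplicity_eq_zero hroot.2] at hc

end Order

section Coboundary

variable {K : Type*} [Field K]

def IsMulCoboundary (σ : K →+* K) (f : K) : Prop := ∃ g ≠ 0, f = σ g / g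

namespace IsMulCoboundary

variable {σ : K →+* K} {f f' : K}

lemma one : IsMulCoboundary σ 1 := ⟨1, one_ne_zero, by simp⟩

lemma mul (hf : IsMulCoboundary σ f) (hf' : IsMulCoboundary σ f') :
    IsMulCoboundary σ (f * f') := by
  obtain ⟨g, hg, rfl⟩ := hf
  obtain ⟨g', hg', rfl⟩ := hf'
  exact ⟨g * g', mul_ne_zero hg hg', by rw [map_mul, mul_div_mul_comm]⟩

lemma inv (hf : IsMulCoboundary σ f) : IsMulCoboundary σ f⁻¹ := by
  obtain ⟨g, hg, rfl⟩ := hf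
  exact ⟨g⁻¹, inv_ne_zero hg, by rw [map_inv₀, inv_div, div_inv_eq_mul, inv_mul_eq_div]⟩

lemma zpow (hf : IsMulCoboundary σ f) (k : ℤ) : IsMulCoboundary σ (f ^ k) := by
  obtain ⟨g, hg, rfl⟩ := hf
  exact ⟨g ^ k, zpow_ne_zero k hg, by rw [map_zpow₀, div_zpow]⟩

end IsMulCoboundary

end Coboundary

section Sigmaq

variable {q : ℂ}

lemma nonZeroDivisors_le_comap_compRingHom (hq0 : q ≠ 0) :
    nonZeroDivisors ℂ[X] ≤ (nonZeroDivisors ℂ[X]).comap (compRingHom (C q * X)) := fun _ hp =>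
  mem_nonZeroDivisors_of_ne_zero <|
    (comp_C_mul_X_eq_zero_iff (mem_nonZeroDivisors_of_ne_zero hq0)).not.mpr
      (nonZeroDivisors.ne_zero hp)

def sigmaqHom (hq0 : q ≠ 0) : RatFunc ℂ →+* RatFunc ℂ :=
  RatFunc.mapRingHom (compRingHom (C q * X)) (nonZeroDivisors_le_comap_compRingHom hq0)

lemma sigmaqHom_apply (hq0 : q ≠ 0) (a : RatFunc ℂ) : sigmaqHom hq0 a = sigmaq q a := by
  rw [sigmaqHom, RatFunc.coe_mapRingHom_eq_coe_map, RatFunc.map_apply]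
  rfl

lemma sigmaqHom_algebraMap (hq0 : q ≠ 0) (p : ℂ[X]) :
    sigmaqHom hq0 (algebraMap ℂ[X] (RatFunc ℂ) p) =
      algebraMap ℂ[X] (RatFunc ℂ) (p.comp (C q * X)) := by
  rw [sigmaqHom, RatFunc.coe_mapRingHom_eq_coe_map]
  simpa using RatFunc.map_apply_div _ (nonZeroDivisors_le_comap_compRingHom hq0) p 1

lemma sigmaqHom_X (hq0 : q ≠ 0) : sigmaqHom hq0 RatFunc.X = RatFunc.C q * RatFunc.X := by
  simpa using sigmaqHom_algebraMap hq0 X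

lemma sigmaqHom_C (hq0 : q ≠ 0) (c : ℂ) : sigmaqHom hq0 (RatFunc.C c) = RatFunc.C c := by
  simpa using sigmaqHom_algebraMap hq0 (C c)

-- `σ_q (X - q e) = q (X - e)`, and the factor `q = σ_q X / X` is absorbed by dividing by `X`.
lemma isMulCoboundary_X_sub_C_div_X_sub_C_mul (hq0 : q ≠ 0) (e : ℂ) :
    IsMulCoboundary (sigmaqHom hq0)
      ((RatFunc.X - RatFunc.C e) / (RatFunc.X - RatFunc.C (q * e))) := by
  refine ⟨(RatFunc.X - RatFunc.C (q * e)) / RatFunc.X,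
    div_ne_zero (RatFunc.X_sub_C_ne_zero _) RatFunc.X_ne_zero, ?_⟩
  have hCq : RatFunc.C q ≠ 0 := by simpa using hq0
  have hX : (RatFunc.X : RatFunc ℂ) ≠ 0 := RatFunc.X_ne_zero
  have hXqe := RatFunc.X_sub_C_ne_zero (q * e)
  rw [map_div₀, map_sub, sigmaqHom_X, sigmaqHom_C, map_mul RatFunc.C]
  field_simp

lemma isMulCoboundary_X_sub_C_div_X_sub_C_zpow_mul (hq0 : q ≠ 0) (c : ℂ) (m : ℤ) :
    IsMulCoboundary (sigmaqHom hq0)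
      ((RatFunc.X - RatFunc.C c) / (RatFunc.X - RatFunc.C (q ^ m * c))) := by
  induction m using Int.induction_on with
  | zero => simpa [div_self (RatFunc.X_sub_C_ne_zero c)] using IsMulCoboundary.one
  | succ n ih =>
    convert ih.mul (isMulCoboundary_X_sub_C_div_X_sub_C_mul hq0 (q ^ (n : ℤ) * c)) using 1
    rw [div_mul_div_cancel₀ (RatFunc.X_sub_C_ne_zero _), zpow_add_one₀ hq0, mul_comm _ q,
      mul_assoc]
  | pred n ih =>
    have step := isMulCoboundary_X_sub_C_div_X_sub_C_mul hq0 (q ^ (-(n : ℤ) - 1) * c)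
    convert ih.mul step.inv using 1
    have hshift : q * (q ^ (-(n : ℤ) - 1) * c) = q ^ (-(n : ℤ)) * c := by
      rw [← mul_assoc, ← zpow_one_add₀ hq0, add_sub_cancel]
    rw [inv_div, hshift, div_mul_div_cancel₀ (RatFunc.X_sub_C_ne_zero _)]

end Sigmaq

lemma zpow_ne_one_of_norm_ne_one {𝕜 : Type*} [NormedDivisionRing 𝕜] {q : 𝕜} (hq : ‖q‖ ≠ 1)
    {m : ℤ} (hm : m ≠ 0) : q ^ m ≠ 1 := by
  intro h
  have hnorm : ‖q‖ ^ m = 1 := by rw [← norm_zpow, h, norm_one]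
  exact hm ((zpow_eq_one_iff_right₀ (norm_nonneg q) hq).mp hnorm)

lemma exists_divisorSupport_ssubset_of_not_standardQ {q : ℂ} (hq0 : q ≠ 0) (hq : ‖q‖ ≠ 1)
    {a : RatFunc ℂ} (ha : a ≠ 0) (hstd : ¬StandardQ q a) :
    ∃ a' : RatFunc ℂ, a' ≠ 0 ∧ divisorSupport a' ⊂ divisorSupport a ∧
      IsMulCoboundary (sigmaqHom hq0) (a / a') := by
  simp only [StandardQ, not_forall] at hstd
  obtain ⟨c, hc0, hc, m, hm, hc'⟩ := hstd
  set c' := q ^ m * c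
  have hcc' : c ≠ c' := fun h =>
    zpow_ne_one_of_norm_ne_one hq hm (mul_right_cancel₀ hc0 (h.symm.trans (one_mul c).symm))
  set L := (RatFunc.X - RatFunc.C c) / (RatFunc.X - RatFunc.C c')
  have hL : L ≠ 0 := div_ne_zero (RatFunc.X_sub_C_ne_zero c) (RatFunc.X_sub_C_ne_zero c')
  -- `L ^ (-k)` moves the order `k` of `a` at `c` over to `c'`
  set k := ordAt a c
  have hord (e : ℂ) : ordAt (a * L ^ (-k)) e =
      ordAt a e - k * ((if e = c then 1 else 0) - (if e = c' then 1 else 0)) := by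
    rw [ordAt_mul ha (zpow_ne_zero _ hL), ordAt_zpow hL, ordAt_X_sub_C_div_X_sub_C]
    ring
  refine ⟨a * L ^ (-k), mul_ne_zero ha (zpow_ne_zero _ hL), ?_, ?_⟩
  · refine Set.ssubset_iff_of_subset ?_ |>.mpr ⟨c, ⟨hc0, hc⟩, fun h => h.2 ?_⟩
    · rintro e ⟨he0, he⟩
      refine ⟨he0, fun hae => ?_⟩
      by_cases hec : e = c
      · rw [hec] at hae
        exact hc hae
      by_cases hec' : e = c'
      · rw [hec'] at hae
        exact hc' hae
      rw [hord, hae, if_neg hec, if_neg hec'] at he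
      simp at he
    · rw [hord, if_pos rfl, if_neg hcc']
      ring
  · rw [div_mul_cancel_left₀ ha, ← zpow_neg, neg_neg]
    exact (isMulCoboundary_X_sub_C_div_X_sub_C_zpow_mul hq0 c m).zpow k

lemma exists_standardQ_isMulCoboundary_div {q : ℂ} (hq0 : q ≠ 0) (hq : ‖q‖ ≠ 1)
    {a : RatFunc ℂ} (ha : a ≠ 0) :
    ∃ abar : RatFunc ℂ, abar ≠ 0 ∧ StandardQ q abar ∧
      IsMulCoboundary (sigmaqHom hq0) (a / abar) := by
  induction h : (divisorSupport a).ncard using Nat.strong_induction_on generalizing a with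
  | _ n ih =>
  by_cases hstd : StandardQ q a
  · exact ⟨a, ha, hstd, by simpa [div_self ha] using IsMulCoboundary.one⟩
  obtain ⟨a', ha', hsub, hcob⟩ := exists_divisorSupport_ssubset_of_not_standardQ hq0 hq ha hstd
  obtain ⟨abar, habar, hstd', hcob'⟩ :=
    ih _ (h ▸ Set.ncard_lt_ncard hsub (divisorSupport_finite ha)) ha' rfl
  exact ⟨abar, habar, hstd', div_mul_div_cancel₀ ha' ▸ hcob.mul hcob'⟩

/-- Lemme 4.7, point 1. Every `a ∈ ℂ(z)*` has a standard form:
there exist `g ∈ ℂ(z)*` and a standard `ā ∈ ℂ(z)*` with `a = ā·σ_q(g)/g`. -/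
theorem statement14 (q : ℂ) (hq0 : q ≠ 0) (hq : ‖q‖ ≠ 1)
    (a : RatFunc ℂ) (ha : a ≠ 0) :
    ∃ g abar : RatFunc ℂ, g ≠ 0 ∧ abar ≠ 0 ∧ StandardQ q abar ∧
      a = abar * sigmaq q g / g := by
  obtain ⟨abar, habar, hstd, g, hg, hag⟩ := exists_standardQ_isMulCoboundary_div hq0 hq ha
  refine ⟨g, abar, hg, habar, hstd, ?_⟩
  rw [mul_div_assoc, ← sigmaqHom_apply hq0, ← hag, mul_div_cancel₀ a habar]
end
end

section
/- Let q ∈ ℂ* with |q| ≠ 1 and let a ∈ ℂ(z)* be standard and possess at least one zero or pole in ℂ* (i.e. away from 0 and ∞). Then the family {∂^j(∂a/a) : j ∈ ℕ} (where ∂ = z·d/dz) is linearly independent over ℂ modulo (σ_q − id)(ℂ(z)): for any complex numbers λ_0, …, λ_N not all zero, there is no k ∈ ℂ(z) with Σ_{j=0}^N λ_j·∂^j(∂a/a) = σ_q(k) − k. -/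
/-!
Setting: fix `q ∈ ℂ*` with `|q| ≠ 1`.  We work with meromorphic functions on the
punctured plane `ℂ* = {z ≠ 0}`, represented as plain functions `ℂ → ℂ` together
with a `MeromorphicOn` hypothesis; all identities between meromorphic functions
are understood to hold off a countable (discrete) exceptional set (`MZeroOn`).

* `CE q` is the field `C_E` of `σ_q`-invariant meromorphic functions on `ℂ*`;
* `KE q` is the field `K_E = C_E(z)`;
* `AlgIndepOver U K g` says that the family `g` of meromorphic functions on `U`
  is algebraically independent over the coefficient field `K`: every polynomial
  with coefficients in `K` that vanishes (as meromorphic function on `U`) at the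
  family has all its coefficients zero as meromorphic functions;
* `delq` is the derivation `∂ = z·d/dz` on functions, `dRat` the corresponding
  derivation on rational functions;
* `sigmaq q` is the substitution `z ↦ qz` on rational functions `RatFunc ℂ`;
* `QDE q a f` is the q-difference equation `f(qz) = a(z)·f(z)` as an identity of
  meromorphic functions on `ℂ*` (written without denominators);
* `ordAt a c` is the order of vanishing of the rational function `a` at `c`, and
  `divE q hq a` is the elliptic divisor of `a`, an element of the free abelian
  group on `ℂ*/q^ℤ` (realised as a finitely supported `ℤ`-valued function on the
  quotient group `ℂˣ ⧸ zpowers q`).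
-/

open scoped Classical

noncomputable section

/-!
At a zero or pole `c ∈ ℂ*` of `a` the logarithmic derivative `∂a/a` has a simple pole, and `∂`
deepens every pole in `ℂ*` by one, so `b = Σ λⱼ ∂ʲ(∂a/a)` has a pole at `c`; as `a` is
standard, `∂a/a` and hence `b` are regular on the rest of the orbit `q^ℤ c`. If
`b = σ_q k - k`, consider the deepest poles of `k` on that orbit: the first one, at `q^m₁ c`,
produces a pole of `b` at `q^(m₁-1) c`, and the last one, at `q^m₂ c`, a pole of `b` at
`q^m₂ c`. Hence `m₁ - 1 = 0 = m₂`, contradicting `m₁ ≤ m₂`.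
-/

open Polynomial

section OrdAt

variable {f g : RatFunc ℂ} {c : ℂ}

lemma ordAt_zero (c : ℂ) : ordAt 0 c = 0 := by
  simp [ordAt]

lemma ne_zero_of_ordAt_ne_zero (h : ordAt f c ≠ 0) : f ≠ 0 := by
  rintro rfl
  exact h (ordAt_zero c)

lemma isRoot_denom_of_ordAt_neg (h : ordAt f c < 0) : f.denom.IsRoot c := by
  have : 0 < rootMultiplicity c f.denom := by unfold ordAt at h; omega
  exact (rootMultiplicity_pos (RatFunc.denom_ne_zero f)).mp this

lemma ordAt_div_algebraMap {P Q : ℂ[X]} (hP : P ≠ 0) (hQ : Q ≠ 0) (c : ℂ) :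
    ordAt (algebraMap ℂ[X] (RatFunc ℂ) P / algebraMap ℂ[X] (RatFunc ℂ) Q) c =
      rootMultiplicity c P - rootMultiplicity c Q := by
  set f := algebraMap ℂ[X] (RatFunc ℂ) P / algebraMap ℂ[X] (RatFunc ℂ) Q
  have hf : f ≠ 0 := div_ne_zero (RatFunc.algebraMap_ne_zero hP) (RatFunc.algebraMap_ne_zero hQ)
  have hcross : f.num * Q = P * f.denom := by
    apply RatFunc.algebraMap_injective ℂ
    rw [map_mul, map_mul, ← div_eq_div_iff (RatFunc.algebraMap_ne_zero (RatFunc.denom_ne_zero f))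
      (RatFunc.algebraMap_ne_zero hQ), RatFunc.num_div_denom]
  have := congrArg (rootMultiplicity c) hcross
  rw [rootMultiplicity_mul (mul_ne_zero (RatFunc.num_ne_zero hf) hQ),
    rootMultiplicity_mul (mul_ne_zero hP (RatFunc.denom_ne_zero f))] at this
  unfold ordAt
  omega

lemma ordAt_div_algebraMap_nonneg {P Q : ℂ[X]} (hQ : ¬ Q.IsRoot c) :
    0 ≤ ordAt (algebraMap ℂ[X] (RatFunc ℂ) P / algebraMap ℂ[X] (RatFunc ℂ) Q) c := by
  rcases eq_or_ne P 0 with rfl | hP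
  · simp [ordAt_zero]
  have hQ0 : Q ≠ 0 := by rintro rfl; exact hQ (by simp)
  rw [ordAt_div_algebraMap hP hQ0, rootMultiplicity_eq_zero hQ]
  simp

lemma ordAt_mul_s17 (hf : f ≠ 0) (hg : g ≠ 0) (c : ℂ) :
    ordAt (f * g) c = ordAt f c + ordAt g c := by
  have hN := mul_ne_zero (RatFunc.num_ne_zero hf) (RatFunc.num_ne_zero hg)
  have hD := mul_ne_zero (RatFunc.denom_ne_zero f) (RatFunc.denom_ne_zero g)
  have hfg : f * g = algebraMap ℂ[X] (RatFunc ℂ) (f.num * g.num) /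
      algebraMap ℂ[X] (RatFunc ℂ) (f.denom * g.denom) := by
    rw [map_mul, map_mul, mul_div_mul_comm, RatFunc.num_div_denom, RatFunc.num_div_denom]
  rw [hfg, ordAt_div_algebraMap hN hD, rootMultiplicity_mul hN, rootMultiplicity_mul hD]
  unfold ordAt
  push_cast
  ring

lemma ordAt_C_mul {l : ℂ} (hl : l ≠ 0) (f : RatFunc ℂ) (c : ℂ) :
    ordAt (RatFunc.C l * f) c = ordAt f c := by
  rcases eq_or_ne f 0 with rfl | hf
  · simp
  rw [ordAt_mul_s17 (by simpa using hl) hf]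
  simp [ordAt, RatFunc.num_C, RatFunc.denom_C, rootMultiplicity_eq_zero, hl]

lemma ordAt_neg (f : RatFunc ℂ) (c : ℂ) : ordAt (-f) c = ordAt f c := by
  simpa using ordAt_C_mul (neg_ne_zero.mpr one_ne_zero) f c

lemma min_ordAt_le_ordAt_add (hf : f ≠ 0) (hg : g ≠ 0) (hfg : f + g ≠ 0) (c : ℂ) :
    min (ordAt f c) (ordAt g c) ≤ ordAt (f + g) c := by
  have hD := mul_ne_zero (RatFunc.denom_ne_zero f) (RatFunc.denom_ne_zero g)
  have hrep : f + g = algebraMap ℂ[X] (RatFunc ℂ) (f.num * g.denom + g.num * f.denom) /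
      algebraMap ℂ[X] (RatFunc ℂ) (f.denom * g.denom) := by
    conv_lhs => rw [← RatFunc.num_div_denom f, ← RatFunc.num_div_denom g]
    rw [div_add_div _ _ (RatFunc.algebraMap_ne_zero (RatFunc.denom_ne_zero f))
      (RatFunc.algebraMap_ne_zero (RatFunc.denom_ne_zero g))]
    simp only [map_add, map_mul]
    ring
  have hN : f.num * g.denom + g.num * f.denom ≠ 0 := by
    rintro h0
    rw [hrep, h0, map_zero, zero_div] at hfg
    exact hfg rfl
  have hmin := rootMultiplicity_add c hN
  rw [rootMultiplicity_mul (mul_ne_zero (RatFunc.num_ne_zero hf) (RatFunc.denom_ne_zero g)),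
    rootMultiplicity_mul (mul_ne_zero (RatFunc.num_ne_zero hg) (RatFunc.denom_ne_zero f))] at hmin
  rw [hrep, ordAt_div_algebraMap hN hD, rootMultiplicity_mul hD]
  unfold ordAt
  omega

-- As `ordAt 0 c = 0`, a cancellation `f + g = 0` is harmless only for `t ≤ 0`.
lemma le_ordAt_add {t : ℤ} (ht : t ≤ 0) (hf : t ≤ ordAt f c) (hg : t ≤ ordAt g c) :
    t ≤ ordAt (f + g) c := by
  rcases eq_or_ne f 0 with rfl | hf0
  · simpa using hg
  rcases eq_or_ne g 0 with rfl | hg0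
  · simpa using hf
  rcases eq_or_ne (f + g) 0 with hfg | hfg
  · rwa [hfg, ordAt_zero]
  exact (le_min hf hg).trans (min_ordAt_le_ordAt_add hf0 hg0 hfg c)

lemma le_ordAt_sum {ι : Type*} {s : Finset ι} {g : ι → RatFunc ℂ} {t : ℤ} (ht : t ≤ 0)
    (h : ∀ i ∈ s, t ≤ ordAt (g i) c) : t ≤ ordAt (∑ i ∈ s, g i) c :=
  Finset.sum_induction g (fun x => t ≤ ordAt x c) (fun _ _ => le_ordAt_add ht)
    (by rwa [ordAt_zero]) h

lemma le_ordAt_C_mul {t : ℤ} (ht : t ≤ 0) (h : t ≤ ordAt f c) (l : ℂ) :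
    t ≤ ordAt (RatFunc.C l * f) c := by
  rcases eq_or_ne l 0 with rfl | hl
  · simpa [ordAt_zero] using ht
  rwa [ordAt_C_mul hl]

lemma ordAt_add_of_lt (hf : f ≠ 0) (h : ordAt f c < ordAt g c) :
    ordAt (f + g) c = ordAt f c := by
  rcases eq_or_ne g 0 with rfl | hg
  · simp
  have hfg : f + g ≠ 0 := by
    intro h0
    rw [eq_neg_of_add_eq_zero_right h0, ordAt_neg] at h
    exact h.false
  have hle := min_ordAt_le_ordAt_add hf hg hfg c
  have hge := min_ordAt_le_ordAt_add hfg (neg_ne_zero.mpr hg) (by simpa using hf) c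
  rw [add_neg_cancel_right, ordAt_neg] at hge
  omega

end OrdAt

section Sigmaq

variable {q : ℂ}

lemma comp_C_mul_X_ne_zero (hq : q ≠ 0) {P : ℂ[X]} (hP : P ≠ 0) : P.comp (C q * X) ≠ 0 :=
  mt (comp_C_mul_X_eq_zero_iff (mem_nonZeroDivisors_of_ne_zero hq)).mp hP

lemma rootMultiplicity_comp_C_mul_X (hq : q ≠ 0) (P : ℂ[X]) (c : ℂ) :
    rootMultiplicity c (P.comp (C q * X)) = rootMultiplicity (q * c) P := by
  simpa using rootMultiplicity_comp_C_mul_X_add_C P q 0 c (IsUnit.mk0 q hq)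

lemma ordAt_sigmaq (hq : q ≠ 0) (k : RatFunc ℂ) (c : ℂ) :
    ordAt (sigmaq q k) c = ordAt k (q * c) := by
  rcases eq_or_ne k 0 with rfl | hk
  · simp [sigmaq, ordAt_zero]
  rw [sigmaq, ordAt_div_algebraMap (comp_C_mul_X_ne_zero hq (RatFunc.num_ne_zero hk))
    (comp_C_mul_X_ne_zero hq (RatFunc.denom_ne_zero k)), rootMultiplicity_comp_C_mul_X hq,
    rootMultiplicity_comp_C_mul_X hq, ordAt]

end Sigmaq

section LogDeriv

variable {f : RatFunc ℂ} {c : ℂ}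

lemma dRat_zero : dRat 0 = 0 := by
  simp [dRat]

lemma dRat_div_self (hf : f ≠ 0) :
    dRat f / f = algebraMap ℂ[X] (RatFunc ℂ) (X * derivative f.num) /
        algebraMap ℂ[X] (RatFunc ℂ) f.num -
      algebraMap ℂ[X] (RatFunc ℂ) (X * derivative f.denom) /
        algebraMap ℂ[X] (RatFunc ℂ) f.denom := by
  have hN := RatFunc.algebraMap_ne_zero (RatFunc.num_ne_zero hf)
  have hD := RatFunc.algebraMap_ne_zero (RatFunc.denom_ne_zero f)
  rw [dRat]
  conv_lhs => arg 2; rw [← RatFunc.num_div_denom f]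
  rw [map_mul, map_mul, RatFunc.algebraMap_X]
  field_simp

lemma ordAt_X_mul_derivative_div_self {P : ℂ[X]} (hc : c ≠ 0) (hP : P ≠ 0)
    (hPc : P.IsRoot c) :
    ordAt (algebraMap ℂ[X] (RatFunc ℂ) (X * derivative P) / algebraMap ℂ[X] (RatFunc ℂ) P) c
      = -1 := by
  have hP' : derivative P ≠ 0 :=
    mt derivative_eq_zero.mp (natDegree_pos_iff_degree_pos.mpr (degree_pos_of_root hP hPc)).ne'
  have hpos := (rootMultiplicity_pos hP).mpr hPc
  rw [ordAt_div_algebraMap (mul_ne_zero X_ne_zero hP') hP c,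
    rootMultiplicity_mul (mul_ne_zero X_ne_zero hP'), derivative_rootMultiplicity_of_root hPc,
    rootMultiplicity_eq_zero (by simpa using hc)]
  omega

lemma not_isRoot_num_or_not_isRoot_denom (f : RatFunc ℂ) (c : ℂ) :
    ¬ f.num.IsRoot c ∨ ¬ f.denom.IsRoot c := by
  simpa [coe_aeval_eq_eval] using aeval_ne_zero_of_isCoprime (RatFunc.isCoprime_num_denom f) c

lemma ordAt_of_not_isRoot_num (h : ¬ f.num.IsRoot c) :
    ordAt f c = -rootMultiplicity c f.denom := by
  simp [ordAt, rootMultiplicity_eq_zero h]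

lemma ordAt_of_not_isRoot_denom (h : ¬ f.denom.IsRoot c) :
    ordAt f c = rootMultiplicity c f.num := by
  simp [ordAt, rootMultiplicity_eq_zero h]

/-- `∂f/f` has a simple pole at every zero or pole of `f` in `ℂ*`, since
`∂((z - c)^n u)/((z - c)^n u) = n z/(z - c) + ∂u/u`. -/
lemma ordAt_dRat_div_self (hc : c ≠ 0) (h : ordAt f c ≠ 0) : ordAt (dRat f / f) c = -1 := by
  have hf := ne_zero_of_ordAt_ne_zero h
  rw [dRat_div_self hf, sub_eq_add_neg]
  rcases not_isRoot_num_or_not_isRoot_denom f c with hN | hD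
  · have hD : f.denom.IsRoot c := by
      by_contra hD
      simp [ordAt_of_not_isRoot_num hN, rootMultiplicity_eq_zero hD] at h
    have hpole : ordAt (-(algebraMap ℂ[X] (RatFunc ℂ) (X * derivative f.denom) /
        algebraMap ℂ[X] (RatFunc ℂ) f.denom)) c = -1 := by
      rw [ordAt_neg, ordAt_X_mul_derivative_div_self hc (RatFunc.denom_ne_zero f) hD]
    have hreg := ordAt_div_algebraMap_nonneg (c := c) (P := X * derivative f.num) hN
    rw [add_comm, ordAt_add_of_lt (ne_zero_of_ordAt_ne_zero (by rw [hpole]; simp)) (by omega),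
      hpole]
  · have hN : f.num.IsRoot c := by
      by_contra hN
      simp [ordAt_of_not_isRoot_denom hD, rootMultiplicity_eq_zero hN] at h
    have hpole := ordAt_X_mul_derivative_div_self hc (RatFunc.num_ne_zero hf) hN
    have hreg := ordAt_div_algebraMap_nonneg (c := c) (P := X * derivative f.denom) hD
    rw [← ordAt_neg] at hreg
    rw [ordAt_add_of_lt (ne_zero_of_ordAt_ne_zero (by rw [hpole]; simp)) (by omega), hpole]

lemma ordAt_dRat_div_self_nonneg (h : ordAt f c = 0) : 0 ≤ ordAt (dRat f / f) c := by
  rcases eq_or_ne f 0 with rfl | hf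
  · simp [ordAt_zero]
  have hN : ¬ f.num.IsRoot c := fun hN => by
    have hD := (not_isRoot_num_or_not_isRoot_denom f c).resolve_left (not_not.mpr hN)
    rw [ordAt_of_not_isRoot_denom hD] at h
    exact ((rootMultiplicity_pos (RatFunc.num_ne_zero hf)).mpr hN).ne' (by exact_mod_cast h)
  have hD : ¬ f.denom.IsRoot c := fun hD => by
    rw [ordAt_of_not_isRoot_num hN] at h
    exact ((rootMultiplicity_pos (RatFunc.denom_ne_zero f)).mpr hD).ne' (by omega)
  rw [dRat_div_self hf, sub_eq_add_neg]
  exact le_ordAt_add le_rfl (ordAt_div_algebraMap_nonneg hN)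
    (by rw [ordAt_neg]; exact ordAt_div_algebraMap_nonneg hD)

end LogDeriv

section Derivation

variable {f : RatFunc ℂ} {c : ℂ}

lemma ordAt_dRat (hc : c ≠ 0) (h : ordAt f c ≠ 0) : ordAt (dRat f) c = ordAt f c - 1 := by
  have hf := ne_zero_of_ordAt_ne_zero h
  have hlog := ordAt_dRat_div_self hc h
  rw [← mul_div_cancel₀ (dRat f) hf,
    ordAt_mul_s17 hf (ne_zero_of_ordAt_ne_zero (by rw [hlog]; simp)), hlog]
  ring

lemma ordAt_dRat_nonneg (hc : c ≠ 0) (h : 0 ≤ ordAt f c) : 0 ≤ ordAt (dRat f) c := by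
  rcases h.lt_or_eq with hpos | hzero
  · rw [ordAt_dRat hc hpos.ne']
    omega
  rcases eq_or_ne (dRat f) 0 with hd | hd
  · rw [hd, ordAt_zero]
  have hf : f ≠ 0 := by rintro rfl; exact hd dRat_zero
  rw [← mul_div_cancel₀ (dRat f) hf, ordAt_mul_s17 hf (div_ne_zero hd hf), ← hzero]
  simpa using ordAt_dRat_div_self_nonneg hzero.symm

lemma ordAt_iterate_dRat (hc : c ≠ 0) (h : ordAt f c < 0) (j : ℕ) :
    ordAt (dRat^[j] f) c = ordAt f c - j := by
  induction j with
  | zero => simp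
  | succ j ih =>
    rw [Function.iterate_succ_apply', ordAt_dRat hc (by omega), ih]
    push_cast
    ring

lemma ordAt_iterate_dRat_nonneg (hc : c ≠ 0) (h : 0 ≤ ordAt f c) (j : ℕ) :
    0 ≤ ordAt (dRat^[j] f) c := by
  induction j with
  | zero => simpa using h
  | succ j ih =>
    rw [Function.iterate_succ_apply']
    exact ordAt_dRat_nonneg hc ih

lemma ordAt_sum_C_mul_iterate_dRat_nonneg (hc : c ≠ 0) (h : 0 ≤ ordAt f c) (lam : ℕ → ℂ)
    (s : Finset ℕ) : 0 ≤ ordAt (∑ j ∈ s, RatFunc.C (lam j) * dRat^[j] f) c :=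
  le_ordAt_sum le_rfl fun j _ =>
    le_ordAt_C_mul le_rfl (ordAt_iterate_dRat_nonneg hc h j) (lam j)

/-- The deepest pole comes from the highest iterate `∂^J f` with `λ_J ≠ 0`. -/
lemma ordAt_sum_C_mul_iterate_dRat_neg (hc : c ≠ 0) (h : ordAt f c < 0) (lam : ℕ → ℂ) (N : ℕ)
    (hlam : ∃ j ≤ N, lam j ≠ 0) :
    ordAt (∑ j ∈ Finset.range (N + 1), RatFunc.C (lam j) * dRat^[j] f) c < 0 := by
  induction N with
  | zero =>
    obtain ⟨j, hj, hlj⟩ := hlam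
    obtain rfl : j = 0 := by omega
    simpa [ordAt_C_mul hlj] using h
  | succ N ih =>
    rw [Finset.sum_range_succ]
    rcases eq_or_ne (lam (N + 1)) 0 with hl | hl
    · rw [hl, map_zero, zero_mul, add_zero]
      obtain ⟨j, hj, hlj⟩ := hlam
      exact ih ⟨j, by grind, hlj⟩
    have htop : ordAt (RatFunc.C (lam (N + 1)) * dRat^[N + 1] f) c = ordAt f c - (N + 1) := by
      rw [ordAt_C_mul hl, ordAt_iterate_dRat hc h]
      push_cast
      ring
    have hrest : ordAt f c - N ≤
        ordAt (∑ j ∈ Finset.range (N + 1), RatFunc.C (lam j) * dRat^[j] f) c := by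
      refine le_ordAt_sum (by omega) fun j hj => le_ordAt_C_mul (by omega) ?_ (lam j)
      rw [ordAt_iterate_dRat hc h]
      have := Finset.mem_range.mp hj
      omega
    have htop_ne : RatFunc.C (lam (N + 1)) * dRat^[N + 1] f ≠ 0 :=
      ne_zero_of_ordAt_ne_zero (c := c) (by omega)
    rw [add_comm, ordAt_add_of_lt htop_ne (by omega), htop]
    omega

end Derivation

lemma exists_first_last_argmin {φ : ℤ → ℤ} (hfin : {m | φ m < 0}.Finite)
    (hneg : ∃ m, φ m < 0) :
    ∃ m₁ m₂, m₁ ≤ m₂ ∧ φ m₁ < 0 ∧ φ m₂ = φ m₁ ∧ φ m₁ < φ (m₁ - 1) ∧ φ m₂ < φ (m₂ + 1) := by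
  obtain ⟨m₀, hm₀ : φ m₀ < 0, hmin⟩ := Set.exists_min_image _ φ hfin hneg
  have hle : ∀ m, φ m₀ ≤ φ m := fun m => by
    by_cases hm : φ m < 0
    · exact hmin m hm
    · exact (le_of_lt hm₀).trans (not_lt.mp hm)
  have hT : {m | φ m = φ m₀}.Finite :=
    hfin.subset fun m (hm : φ m = φ m₀) => show φ m < 0 by omega
  obtain ⟨m₁, hm₁, hfirst⟩ := Set.exists_min_image _ id hT ⟨m₀, rfl⟩
  obtain ⟨m₂, hm₂, hlast⟩ := Set.exists_max_image _ id hT ⟨m₀, rfl⟩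
  simp only [Set.mem_ofPred_eq, id] at hm₁ hm₂ hfirst hlast
  refine ⟨m₁, m₂, hlast m₁ hm₁, by omega, by omega, ?_, ?_⟩
  · have := hle (m₁ - 1)
    have := mt (hfirst (m₁ - 1))
    omega
  · have := hle (m₂ + 1)
    have := mt (hlast (m₂ + 1))
    omega

lemma ordAt_sigmaq_sub_self_nonneg {q c : ℂ} (hq : q ≠ 0) (hc : c ≠ 0) (k : RatFunc ℂ)
    (h : ∀ m : ℤ, m ≠ 0 → 0 ≤ ordAt (sigmaq q k - k) (q ^ m * c)) :
    0 ≤ ordAt (sigmaq q k - k) c := by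
  by_cases hinj : Function.Injective (fun m : ℤ => q ^ m)
  swap
  · obtain ⟨m₁, m₂, hqm, hne⟩ := Function.not_injective_iff.mp hinj
    have hone : q ^ (m₁ - m₂) = 1 := by
      rw [zpow_sub₀ hq, hqm, div_self (zpow_ne_zero _ hq)]
    simpa [hone] using h (m₁ - m₂) (sub_ne_zero.mpr hne)
  set φ : ℤ → ℤ := fun m => ordAt k (q ^ m * c)
  have hσ : ∀ m, ordAt (sigmaq q k) (q ^ m * c) = φ (m + 1) := fun m => by
    rw [ordAt_sigmaq hq, ← mul_assoc, ← zpow_one_add₀ hq, add_comm]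
  have hk : ∀ m, ordAt (-k) (q ^ m * c) = φ m := fun m => ordAt_neg k _
  have hfin : {m | φ m < 0}.Finite := by
    have horbit : Function.Injective (fun m : ℤ => q ^ m * c) :=
      fun m₁ m₂ hm => hinj (mul_right_cancel₀ hc hm)
    exact ((finite_setOfPred_isRoot (RatFunc.denom_ne_zero k)).preimage horbit.injOn).subset
      fun m hm => isRoot_denom_of_ordAt_neg hm
  by_cases hneg : ∃ m, φ m < 0
  · obtain ⟨m₁, m₂, hle, hneg₁, heq, hfirst, hlast⟩ := exists_first_last_argmin hfin hneg
    have h₁ : ordAt (sigmaq q k - k) (q ^ (m₁ - 1) * c) = φ m₁ := by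
      have hσ₁ := hσ (m₁ - 1)
      rw [sub_add_cancel] at hσ₁
      rw [sub_eq_add_neg, ordAt_add_of_lt
        (ne_zero_of_ordAt_ne_zero (c := q ^ (m₁ - 1) * c) (by omega)) (by rw [hk]; omega), hσ₁]
    have h₂ : ordAt (sigmaq q k - k) (q ^ m₂ * c) = φ m₂ := by
      rw [sub_eq_neg_add, ordAt_add_of_lt
        (ne_zero_of_ordAt_ne_zero (c := q ^ m₂ * c) (by rw [hk]; omega))
        (by rw [hk, hσ]; omega), hk]
    have hm₁ : m₁ - 1 = 0 := by
      by_contra hm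
      have := h _ hm
      omega
    have hm₂ : m₂ = 0 := by
      by_contra hm
      have := h _ hm
      omega
    omega
  · push Not at hneg
    have hσ₀ := hσ 0
    have hk₀ := hk 0
    rw [zpow_zero, one_mul] at hσ₀ hk₀
    rw [sub_eq_add_neg]
    exact le_ordAt_add le_rfl (hσ₀ ▸ hneg 1) (hk₀ ▸ hneg 0)

theorem statement17_general (q : ℂ) (hq0 : q ≠ 0)
    (a : RatFunc ℂ) (hstd : StandardQ q a)
    (hzp : ∃ c : ℂ, c ≠ 0 ∧ ordAt a c ≠ 0)
    (N : ℕ) (lam : ℕ → ℂ) (hlam : ∃ j ≤ N, lam j ≠ 0) :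
    ¬ ∃ k : RatFunc ℂ,
        (∑ j ∈ Finset.range (N + 1), RatFunc.C (lam j) * dRat^[j] (dRat a / a)) =
          sigmaq q k - k := by
  rintro ⟨k, hk⟩
  obtain ⟨c, hc, hac⟩ := hzp
  have hpole := ordAt_sum_C_mul_iterate_dRat_neg hc
    (by rw [ordAt_dRat_div_self hc hac]; norm_num) lam N hlam
  have hreg : ∀ m : ℤ, m ≠ 0 → 0 ≤ ordAt (sigmaq q k - k) (q ^ m * c) := fun m hm => by
    have hqmc : q ^ m * c ≠ 0 := mul_ne_zero (zpow_ne_zero m hq0) hc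
    rw [← hk]
    exact ordAt_sum_C_mul_iterate_dRat_nonneg hqmc
      (ordAt_dRat_div_self_nonneg (hstd c hc hac m hm)) lam _
  rw [hk] at hpole
  exact (ordAt_sigmaq_sub_self_nonneg hq0 hc k hreg).not_gt hpole

/-- Lemme 4.16. If `a ∈ ℂ(z)*` is standard and has a zero or
pole in `ℂ*`, then the family `{∂^j(∂a/a) : j ∈ ℕ}` is `ℂ`-linearly independent
modulo `(σ_q − id)(ℂ(z))`: for `λ₀, …, λ_N ∈ ℂ` not all zero, there is no
`k ∈ ℂ(z)` with `Σ_{j≤N} λⱼ·∂^j(∂a/a) = σ_q(k) − k`. -/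
theorem statement17 (q : ℂ) (hq0 : q ≠ 0) (hq : ‖q‖ ≠ 1)
    (a : RatFunc ℂ) (ha : a ≠ 0) (hstd : StandardQ q a)
    (hzp : ∃ c : ℂ, c ≠ 0 ∧ ordAt a c ≠ 0)
    (N : ℕ) (lam : ℕ → ℂ) (hlam : ∃ j ≤ N, lam j ≠ 0) :
    ¬ ∃ k : RatFunc ℂ,
        (∑ j ∈ Finset.range (N + 1), RatFunc.C (lam j) * dRat^[j] (dRat a / a)) =
          sigmaq q k - k :=
  statement17_general q hq0 a hstd hzp N lam hlam
end
end

section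
/- Let τ ∈ ℂ* and let c_0, …, c_N be meromorphic functions on ℂ that are τ-periodic (c_i(z+τ) = c_i(z)). If Σ_{i=0}^N c_i(z)·z^i = 0 identically (as a meromorphic function on ℂ), then c_i = 0 for every i = 0, …, N. -/
/-!
Setting: fix `τ ∈ ℂ*`.  Meromorphic functions on `ℂ` are represented as plain
functions `ℂ → ℂ` together with a `MeromorphicOn` hypothesis; an identity of
meromorphic functions means an identity holding off a countable (discrete)
exceptional set (`MZeroOn`).
-/

noncomputable section

/-- Lemme 5.5. If `c₀, …, c_N` are τ-periodic meromorphic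
functions on `ℂ` and `Σᵢ cᵢ(z)·zⁱ = 0` identically (as a meromorphic function),
then every `cᵢ` is zero (as a meromorphic function). -/
theorem statement19 (τ : ℂ) (hτ : τ ≠ 0) (N : ℕ) (c : Fin (N + 1) → ℂ → ℂ)
    (hmer : ∀ i, MeromorphicOn (c i) Set.univ)
    (hper : ∀ i z, c i (z + τ) = c i z)
    (hzero : MZeroOn Set.univ (fun z => ∑ i : Fin (N + 1), c i z * z ^ (i : ℕ))) :
    ∀ i, MZeroOn Set.univ (c i) := by
  classical
  obtain ⟨S, hS, hSz⟩ := hzero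
  -- periodicity for multiples of τ
  have hpern : ∀ (j : Fin (N + 1)) (n : ℕ) (z : ℂ), c j (z + n * τ) = c j z := by
    intro j n
    induction n with
    | zero => simp
    | succ n ih =>
      intro z
      have : z + (n + 1 : ℕ) * τ = (z + n * τ) + τ := by push_cast; ring
      rw [this, hper, ih]
  intro i
  refine ⟨⋃ n : Fin (N + 1), (fun w => w - (n : ℕ) * τ) '' S,
    Set.countable_iUnion (fun n => hS.image _), ?_⟩
  rintro z ⟨-, hz⟩
  have hz' : ∀ n : Fin (N + 1), z + (n : ℕ) * τ ∉ S := by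
    intro n hn
    exact hz (Set.mem_iUnion.2 ⟨n, ⟨z + (n : ℕ) * τ, hn, by ring⟩⟩)
  have key : ∀ n : Fin (N + 1),
      ∑ j : Fin (N + 1), c j z * (z + (n : ℕ) * τ) ^ (j : ℕ) = 0 := by
    intro n
    have := hSz (z + (n : ℕ) * τ) ⟨trivial, hz' n⟩
    simpa [hpern] using this
  set p : Polynomial ℂ := ∑ j : Fin (N + 1), Polynomial.C (c j z) * Polynomial.X ^ (j : ℕ)
    with hp_def
  have hcoeff : ∀ j : Fin (N + 1), p.coeff (j : ℕ) = c j z := by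
    intro j
    rw [hp_def, Polynomial.finset_sum_coeff]
    simp only [Polynomial.coeff_C_mul, Polynomial.coeff_X_pow]
    rw [Finset.sum_eq_single j]
    · simp
    · intro b _ hb
      have : (j : ℕ) ≠ (b : ℕ) := fun h => hb (Fin.ext h.symm)
      simp only [Polynomial.coeff_X_pow] at *
      simp [if_neg this]
    · simp
  have hdeg : p.natDegree < N + 1 := by
    have : p.natDegree ≤ N := by
      apply Polynomial.natDegree_sum_le_of_forall_le
      intro j _
      calc (Polynomial.C (c j z) * Polynomial.X ^ (j : ℕ)).natDegree
          ≤ (j : ℕ) := Polynomial.natDegree_C_mul_X_pow_le _ _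
        _ ≤ N := Nat.lt_succ_iff.mp j.isLt
    omega
  have hf : Function.Injective (fun n : Fin (N + 1) => z + (n : ℕ) * τ) := by
    intro a b hab
    simp only [add_right_inj] at hab
    have : ((a : ℕ) : ℂ) = (b : ℕ) := mul_right_cancel₀ hτ hab
    exact Fin.ext (Nat.cast_injective this)
  have heval : ∀ n : Fin (N + 1), p.eval (z + (n : ℕ) * τ) = 0 := by
    intro n
    rw [hp_def]
    simp only [Polynomial.eval_finset_sum, Polynomial.eval_mul, Polynomial.eval_C,
      Polynomial.eval_pow, Polynomial.eval_X]
    exact key n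
  have hp0 : p = 0 := by
    apply Polynomial.eq_zero_of_natDegree_lt_card_of_eval_eq_zero p hf heval
    simpa using hdeg
  have := hcoeff i
  rw [hp0] at this
  simpa using this.symm
end
end
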